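/- Consider two ensembles A and B of N stacks with capacities b ≤ b', occupancy vectors Q^A, Q^B (non-increasing, values in {0,...,N}, Q^A(i)=0 for i>b, Q^B(i)=0 for i>b') satisfying Q^A ≤ Q^B componentwise. Suppose one step follows Rule(k, l, l_A, l_B) with l_A ≥ l_B and either l = 1 or l ≥ l_B: removal removes an item from the k-th shortest stack in both ensembles (or from A only), and addition places an item in the l-th shortest stack if the minimum stack height is < b-1, in the l_A-th (resp. l_B-th) shortest stack of A (resp. B) if the minimum height equals b-1, and anywhere in B if B's minimum height ≥ b; items landing on full stacks are dropped. Then the updated occupancy vectors satisfy Q̃^A ≤ Q̃^B componentwise. -/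
import Mathlib


/-- `Ifun N Q c` is the height of the `c`-th shortest stack:
`sup {i ≥ 1 : Q i ≥ N - c + 1}`, with value `0` if the set is empty. -/
noncomputable def Ifun (N : ℕ) (Q : ℕ → ℕ) (c : ℕ) : ℕ :=
  sSup {i | 1 ≤ i ∧ N - c + 1 ≤ Q i}

/-- Removal update: remove an item from the `k`-th shortest stack, i.e.
decrement `Q` at index `I(k)` when `I(k) ≥ 1`. -/
noncomputable def remQ (N : ℕ) (Q : ℕ → ℕ) (k : ℕ) : ℕ → ℕ :=
  fun i => if i = Ifun N Q k ∧ 1 ≤ Ifun N Q k then Q i - 1 else Q i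

/-- Addition update with capacity `cap`: add an item to the `c`-th shortest
stack (increment `Q` at index `I(c) + 1`) unless that stack is full
(`I(c) = cap`), in which case the item is dropped. -/
noncomputable def addQ (N : ℕ) (Q : ℕ → ℕ) (c cap : ℕ) : ℕ → ℕ :=
  fun i => if i = Ifun N Q c + 1 ∧ Ifun N Q c < cap then Q i + 1 else Q i


lemma Ifun_bdd (N cap : ℕ) (Q : ℕ → ℕ) (hcap : ∀ i, cap < i → Q i = 0) (c : ℕ) :
    BddAbove {i | 1 ≤ i ∧ N - c + 1 ≤ Q i} := by
  refine ⟨cap, fun i hi => ?_⟩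
  by_contra h
  push_neg at h
  have h0 := hcap i h
  have h1 := hi.2
  omega

lemma le_Ifun (N cap : ℕ) (Q : ℕ → ℕ) (hcap : ∀ i, cap < i → Q i = 0) (c i : ℕ)
    (h1 : 1 ≤ i) (h2 : N - c + 1 ≤ Q i) : i ≤ Ifun N Q c :=
  le_csSup (Ifun_bdd N cap Q hcap c) ⟨h1, h2⟩

lemma Ifun_spec (N cap : ℕ) (Q : ℕ → ℕ) (hcap : ∀ i, cap < i → Q i = 0) (c : ℕ)
    (h : 1 ≤ Ifun N Q c) : N - c + 1 ≤ Q (Ifun N Q c) := by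
  have hne : {i | 1 ≤ i ∧ N - c + 1 ≤ Q i}.Nonempty := by
    by_contra hemp
    rw [Set.not_nonempty_iff_eq_empty] at hemp
    unfold Ifun at h
    rw [hemp, csSup_empty] at h
    simp at h
  exact (Nat.sSup_mem hne (Ifun_bdd N cap Q hcap c)).2

lemma Ifun_lt (N cap : ℕ) (Q : ℕ → ℕ) (hcap : ∀ i, cap < i → Q i = 0) (c i : ℕ)
    (h1 : 1 ≤ i) (h : Ifun N Q c < i) : Q i < N - c + 1 := by
  by_contra h2
  push_neg at h2
  have := le_Ifun N cap Q hcap c i h1 h2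
  omega

lemma Ifun_mono (N cap cap' : ℕ) (Q Q' : ℕ → ℕ) (hcap : ∀ i, cap < i → Q i = 0)
    (hcap' : ∀ i, cap' < i → Q' i = 0) (c c' : ℕ)
    (hQ : ∀ i, Q i ≤ Q' i) (hc : c ≤ c') : Ifun N Q c ≤ Ifun N Q' c' := by
  rcases Nat.eq_zero_or_pos (Ifun N Q c) with h | h
  · omega
  · have h1 := Ifun_spec N cap Q hcap c h
    exact le_Ifun N cap' Q' hcap' c' _ h (by have := hQ (Ifun N Q c); omega)

/-- Proposition 1 of the paper (deterministic ordering under `Rule(k,l,l_A,l_B)`):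
for ensembles A (capacity `b`) and B (capacity `b' ≥ b`) with `Q^A ≤ Q^B`
componentwise, and `l_A ≥ l_B`, `l = 1 ∨ l ≥ l_B`, both the removal step
(from the `k`-th shortest stack in both ensembles, or from A only) and the
addition step (to the `l`-th shortest stack when the minimum height is `< b-1`,
to the `l_A`-th resp. `l_B`-th shortest stack when the minimum height is `b-1`,
and to an arbitrary stack of B when B's minimum height is `≥ b`; items landing
on full stacks are dropped) preserve the componentwise ordering. -/
theorem stmt_9 (N b b' : ℕ) (hb2 : 2 ≤ b) (hbb' : b ≤ b')
    (QA QB : ℕ → ℕ)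
    (hmA : ∀ i j, i ≤ j → QA j ≤ QA i)
    (hmB : ∀ i j, i ≤ j → QB j ≤ QB i)
    (hAB : ∀ i, QA i ≤ QB i)
    (hbdB : ∀ i, QB i ≤ N)
    (hcapA : ∀ i, b < i → QA i = 0)
    (hcapB : ∀ i, b' < i → QB i = 0)
    (k l lA lB : ℕ)
    (hk1 : 1 ≤ k) (hkN : k ≤ N)
    (hl1 : 1 ≤ l) (hlN : l ≤ N)
    (hlA1 : 1 ≤ lA) (hlAN : lA ≤ N)
    (hlB1 : 1 ≤ lB) (hlBN : lB ≤ N)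
    (hlAlB : lB ≤ lA) (hlcond : l = 1 ∨ lB ≤ l) :
    (∀ i, remQ N QA k i ≤ remQ N QB k i) ∧
    (∀ k', 1 ≤ k' → k' ≤ N → ∀ i, remQ N QA k' i ≤ QB i) ∧
    (∀ cB, 1 ≤ cB → cB ≤ N →
      ∀ i, addQ N QA (if Ifun N QA 1 < b - 1 then l else lA) b i ≤
           addQ N QB (if Ifun N QB 1 < b - 1 then l
                      else if Ifun N QB 1 = b - 1 then lB else cB) b' i) := by

  have hN : 1 ≤ N := le_trans hk1 hkN
  refine ⟨?_, ?_, ?_⟩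
  · intro i
    have hI : Ifun N QA k ≤ Ifun N QB k :=
      Ifun_mono N b b' QA QB hcapA hcapB k k hAB le_rfl
    have hABi := hAB i
    unfold remQ
    split_ifs with h1 h2 h2
    · omega
    · omega
    · -- A does not decrement, B does: i = I_B, 1 ≤ I_B
      obtain ⟨hi, hIB1⟩ := h2
      have hne : Ifun N QA k < Ifun N QB k := by
        rcases Nat.lt_or_ge (Ifun N QA k) (Ifun N QB k) with h | h
        · exact h
        · exfalso; exact h1 ⟨by omega, by omega⟩
      have hQBge := Ifun_spec N b' QB hcapB k hIB1
      have hQAlt := Ifun_lt N b QA hcapA k (Ifun N QB k) hIB1 hne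
      subst hi
      omega
    · omega
  · intro k' _ _ i
    have hABi := hAB i
    unfold remQ
    split_ifs <;> omega
  · intro cB hcB1 hcBN i
    set cA := (if Ifun N QA 1 < b - 1 then l else lA) with hcA
    set cBt := (if Ifun N QB 1 < b - 1 then l else if Ifun N QB 1 = b - 1 then lB else cB)
      with hcBt
    have hcA1 : 1 ≤ cA := by rw [hcA]; split_ifs <;> omega
    have hcAN : cA ≤ N := by rw [hcA]; split_ifs <;> omega
    have hcBt1 : 1 ≤ cBt := by rw [hcBt]; split_ifs <;> omega
    have hcBtN : cBt ≤ N := by rw [hcBt]; split_ifs <;> omega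
    have hmAB : Ifun N QA 1 ≤ Ifun N QB 1 :=
      Ifun_mono N b b' QA QB hcapA hcapB 1 1 hAB le_rfl
    have hABi := hAB i
    unfold addQ
    split_ifs with hA hB hB
    · omega
    · -- A increments, B does not
      obtain ⟨hi, hIAb⟩ := hA
      have hQAlt : QA (Ifun N QA cA + 1) < N - cA + 1 :=
        Ifun_lt N b QA hcapA cA _ (by omega) (by omega)
      have hne : Ifun N QA cA ≠ Ifun N QB cBt := by
        intro h
        exact hB ⟨by rw [hi, h], by omega⟩
      subst hi
      have key : QA (Ifun N QA cA + 1) < QB (Ifun N QA cA + 1) := by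
        by_cases hmB1 : Ifun N QB 1 < b - 1
        · have hcAl : cA = l := by rw [hcA, if_pos (by omega)]
          have hcBl : cBt = l := by rw [hcBt, if_pos hmB1]
          have hIAIB : Ifun N QA cA ≤ Ifun N QB cBt :=
            Ifun_mono N b b' QA QB hcapA hcapB cA cBt hAB (by rw [hcAl, hcBl])
          have hIB1 : Ifun N QA cA + 1 ≤ Ifun N QB cBt := by omega
          have hQBIB : N - cBt + 1 ≤ QB (Ifun N QB cBt) :=
            Ifun_spec N b' QB hcapB cBt (by omega)
          have hmono := hmB (Ifun N QA cA + 1) (Ifun N QB cBt) hIB1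
          omega
        · by_cases hmB2 : Ifun N QB 1 = b - 1
          · have hcBlB : cBt = lB := by rw [hcBt, if_neg hmB1, if_pos hmB2]
            have hmBIB : Ifun N QB 1 ≤ Ifun N QB cBt :=
              Ifun_mono N b' b' QB QB hcapB hcapB 1 cBt (fun _ => le_rfl) hcBt1
            have hIB1 : Ifun N QA cA + 1 ≤ Ifun N QB cBt := by omega
            have hQBIB : N - cBt + 1 ≤ QB (Ifun N QB cBt) :=
              Ifun_spec N b' QB hcapB cBt (by omega)
            have hmono := hmB (Ifun N QA cA + 1) (Ifun N QB cBt) hIB1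
            by_cases hmA1 : Ifun N QA 1 < b - 1
            · have hcAl : cA = l := by rw [hcA, if_pos hmA1]
              rcases hlcond with hl | hl
              · -- l = 1, so I_A is the min height of A, and I_A + 1 ≤ m_B
                have hIAm : Ifun N QA cA = Ifun N QA 1 := by rw [hcAl, hl]
                have h2 : Ifun N QA cA + 1 ≤ Ifun N QB 1 := by omega
                have hQBm : N - 1 + 1 ≤ QB (Ifun N QB 1) :=
                  Ifun_spec N b' QB hcapB 1 (by omega)
                have hmono2 := hmB (Ifun N QA cA + 1) (Ifun N QB 1) h2
                omega
              · omega
            · have hcAlA : cA = lA := by rw [hcA, if_neg hmA1]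
              omega
          · -- m_B ≥ b
            have h2 : Ifun N QA cA + 1 ≤ Ifun N QB 1 := by omega
            have hQBm : N - 1 + 1 ≤ QB (Ifun N QB 1) :=
              Ifun_spec N b' QB hcapB 1 (by omega)
            have hmono2 := hmB (Ifun N QA cA + 1) (Ifun N QB 1) h2
            omega
      omega
    · omega
    · omega
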